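/- arXiv:2510.06384 — 3 statements merged into one kernel-verified Lean document; each statement's English description precedes it below -/
import Mathlib

section
/- The collective dissipative channels do not change the weight of any state in the fully symmetric subspace: for every linear operator ρ on (ℂ²)^{⊗N}, Tr(P_sym (J₋ ρ J₊ − ½{J₊J₋, ρ}) P_sym) = 0 and Tr(P_sym (J₊ ρ J₋ − ½{J₋J₊, ρ}) P_sym) = 0. -/
/-! STATEMENT 2: The collective dissipative channels do not change the weight
of any state in the fully symmetric subspace: for every linear operator ρ on
(ℂ²)^{⊗N}, Tr(P_sym (J₋ ρ J₊ − ½{J₊J₋, ρ}) P_sym) = 0 and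
Tr(P_sym (J₊ ρ J₋ − ½{J₋J₊, ρ}) P_sym) = 0. -/

open Matrix BigOperators

noncomputable section

/-- Operators on the N-qubit Hilbert space (ℂ²)^{⊗N}, represented as matrices
in the computational basis indexed by bit strings `Fin N → Fin 2`. -/
abbrev QOp (N : ℕ) : Type := Matrix (Fin N → Fin 2) (Fin N → Fin 2) ℂ

/-- Vectors of the N-qubit Hilbert space (ℂ²)^{⊗N}. -/
abbrev QVec (N : ℕ) : Type := (Fin N → Fin 2) → ℂ

/-- The raising operator σ₊ = |1⟩⟨0| acting on site `i` (identity elsewhere). -/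
def sigmaPlus (N : ℕ) (i : Fin N) : QOp N :=
  Matrix.of fun x y => if x i = 1 ∧ y i = 0 ∧ ∀ j, j ≠ i → x j = y j then 1 else 0

/-- The lowering operator σ₋ = |0⟩⟨1| acting on site `i` (identity elsewhere). -/
def sigmaMinus (N : ℕ) (i : Fin N) : QOp N :=
  Matrix.of fun x y => if x i = 0 ∧ y i = 1 ∧ ∀ j, j ≠ i → x j = y j then 1 else 0

/-- Collective raising operator J₊ = Σᵢ σ₊^(i). -/
def Jplus (N : ℕ) : QOp N := ∑ i, sigmaPlus N i

/-- Collective lowering operator J₋ = Σᵢ σ₋^(i). -/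
def Jminus (N : ℕ) : QOp N := ∑ i, sigmaMinus N i

/-- The unitary permuting the N tensor factors according to `π`:
it maps the basis state |x⟩ to the basis state |x ∘ π⁻¹⟩. -/
def permMatrix (N : ℕ) (π : Equiv.Perm (Fin N)) : QOp N :=
  Matrix.of fun x y => if (fun i => x (π i)) = y then 1 else 0

/-- `P` is the orthogonal projector onto the fully symmetric subspace of
(ℂ²)^{⊗N}: it is idempotent, self-adjoint, and its fixed points are exactly
the vectors invariant under every permutation of the N tensor factors. -/
def IsSymProjector (N : ℕ) (P : QOp N) : Prop :=
  P * P = P ∧ Pᴴ = P ∧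
    ∀ v : QVec N, P.mulVec v = v ↔
      ∀ π : Equiv.Perm (Fin N), (permMatrix N π).mulVec v = v

/-! The collective operators `J₊`, `J₋` commute with every permutation of the tensor
factors, so both map the symmetric subspace into itself. Since `P` is self-adjoint and
`J₊ᴴ = J₋`, this makes `P` commute with `J₊` and `J₋`. Cyclicity of the trace then turns each
of the three terms of `tr (P D[L](ρ) P)` into `tr (P L† L ρ)`, and they cancel. -/

theorem commute_of_mul_mul_eq_mul {R : Type*} [Monoid R] [StarMul R] {p a : R}
    (hp : IsSelfAdjoint p) (ha : p * a * p = a * p) (ha' : p * star a * p = star a * p) :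
    Commute p a := by
  have hpa : p * a * p = p * a := by
    simpa only [star_mul, star_star, hp.star_eq, mul_assoc] using congrArg star ha'
  exact hpa.symm.trans ha

section Trace

variable {n R : Type*} [Fintype n] [CommRing R] {P : Matrix n n R}

theorem trace_mul_mul_of_isIdempotentElem (hP : IsIdempotentElem P) (M : Matrix n n R) :
    trace (P * M * P) = trace (P * M) := by
  rw [trace_mul_comm, ← Matrix.mul_assoc, hP]

theorem trace_mul_mul_comm_of_commute {C : Matrix n n R} (hC : Commute P C) (M : Matrix n n R) :
    trace (P * (M * C)) = trace (P * (C * M)) := by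
  rw [← Matrix.mul_assoc, trace_mul_comm, ← Matrix.mul_assoc, ← hC.eq, Matrix.mul_assoc]

end Trace

/-- The Lindblad dissipator `D[L](ρ) = L ρ L† − ½ {L† L, ρ}`, with `L'` in the role of
`L†`. -/
def dissipator {n R : Type*} [Fintype n] [Field R] (L L' ρ : Matrix n n R) : Matrix n n R :=
  L * ρ * L' - (2 : R)⁻¹ • (L' * L * ρ + ρ * (L' * L))

theorem trace_mul_dissipator_mul_eq_zero {n R : Type*} [Fintype n] [Field R] [NeZero (2 : R)]
    {P L L' : Matrix n n R} (hP : IsIdempotentElem P) (hL : Commute P L) (hL' : Commute P L')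
    (ρ : Matrix n n R) : trace (P * dissipator L L' ρ * P) = 0 := by
  have hjump : trace (P * (L * ρ * L')) = trace (P * (L' * L * ρ)) := by
    rw [trace_mul_mul_comm_of_commute hL', Matrix.mul_assoc]
  have hright : trace (P * (ρ * (L' * L))) = trace (P * (L' * L * ρ)) :=
    trace_mul_mul_comm_of_commute (hL'.mul_right hL) ρ
  rw [trace_mul_mul_of_isIdempotentElem hP, dissipator, Matrix.mul_sub, Matrix.mul_smul,
    Matrix.mul_add, trace_sub, trace_smul, trace_add, hjump, hright, smul_eq_mul]
  field_simp
  ring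

theorem forall_ne_perm_apply_iff {ι α : Type*} (π : Equiv.Perm ι) (i : ι) (x y : ι → α) :
    (∀ j, j ≠ i → x (π j) = y (π j)) ↔ ∀ j, j ≠ π i → x j = y j :=
  π.forall_congr fun {_} => by rw [π.injective.ne_iff]

section Permutation

variable {N : ℕ} (π : Equiv.Perm (Fin N))

theorem commute_permMatrix_of_apply_comp {M : QOp N}
    (hM : ∀ x y, M (x ∘ π) (y ∘ π) = M x y) : Commute (permMatrix N π) M := by
  ext x y
  have hcol : ∀ z : Fin N → Fin 2, z ∘ π = y ↔ z = y ∘ π.symm := fun z =>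
    (π.eq_comp_symm z y).symm
  simp only [mul_apply, permMatrix, of_apply, ite_mul, one_mul, zero_mul, mul_ite, mul_one,
    mul_zero]
  rw [Finset.sum_ite_eq, if_pos (Finset.mem_univ _)]
  simp only [← Function.comp_def, hcol, Finset.sum_ite_eq', Finset.mem_univ, if_true]
  rw [← hM x (y ∘ π.symm), Function.comp_assoc, Equiv.symm_comp_self, Function.comp_id]

theorem sigmaPlus_apply_comp (i : Fin N) (x y : Fin N → Fin 2) :
    sigmaPlus N i (x ∘ π) (y ∘ π) = sigmaPlus N (π i) x y := by
  simp only [sigmaPlus, of_apply, Function.comp_apply, forall_ne_perm_apply_iff]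

theorem sigmaMinus_apply_comp (i : Fin N) (x y : Fin N → Fin 2) :
    sigmaMinus N i (x ∘ π) (y ∘ π) = sigmaMinus N (π i) x y := by
  simp only [sigmaMinus, of_apply, Function.comp_apply, forall_ne_perm_apply_iff]

theorem commute_permMatrix_Jplus : Commute (permMatrix N π) (Jplus N) :=
  commute_permMatrix_of_apply_comp π fun x y => by
    simp only [Jplus, Matrix.sum_apply, sigmaPlus_apply_comp]
    exact Equiv.sum_comp π fun i => sigmaPlus N i x y

theorem commute_permMatrix_Jminus : Commute (permMatrix N π) (Jminus N) :=
  commute_permMatrix_of_apply_comp π fun x y => by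
    simp only [Jminus, Matrix.sum_apply, sigmaMinus_apply_comp]
    exact Equiv.sum_comp π fun i => sigmaMinus N i x y

end Permutation

theorem Jplus_conjTranspose (N : ℕ) : (Jplus N)ᴴ = Jminus N := by
  rw [Jplus, conjTranspose_sum]
  refine Finset.sum_congr rfl fun i _ => ?_
  ext x y
  simp only [conjTranspose_apply, sigmaPlus, sigmaMinus, of_apply, apply_ite star, star_one,
    star_zero]
  exact if_congr (by grind) rfl rfl

namespace IsSymProjector

variable {N : ℕ} {P A : QOp N}

theorem mul_mul_eq_mul (hP : IsSymProjector N P) (hA : ∀ π, Commute (permMatrix N π) A) :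
    P * A * P = A * P := by
  obtain ⟨hidem, -, hfix⟩ := hP
  refine ext_iff_mulVec.mpr fun v => ?_
  have hsym : ∀ π, permMatrix N π *ᵥ (P *ᵥ v) = P *ᵥ v :=
    (hfix _).mp (by rw [mulVec_mulVec, hidem])
  have hAsym : ∀ π, permMatrix N π *ᵥ (A *ᵥ (P *ᵥ v)) = A *ᵥ (P *ᵥ v) := fun π => by
    rw [mulVec_mulVec, (hA π).eq, ← mulVec_mulVec, hsym]
  simpa only [mulVec_mulVec, Matrix.mul_assoc] using (hfix _).mpr hAsym

theorem commute (hP : IsSymProjector N P) (hA : ∀ π, Commute (permMatrix N π) A)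
    (hA' : ∀ π, Commute (permMatrix N π) Aᴴ) : Commute P A :=
  commute_of_mul_mul_eq_mul hP.2.1 (hP.mul_mul_eq_mul hA) (hP.mul_mul_eq_mul hA')

end IsSymProjector

/-- Both collective dissipative channels preserve the symmetric-subspace weight. -/
theorem collective_dissipator_no_leakage (N : ℕ) (P : QOp N)
    (hP : IsSymProjector N P) (ρ : QOp N) :
    Matrix.trace (P * (Jminus N * ρ * Jplus N
        - (2 : ℂ)⁻¹ • (Jplus N * Jminus N * ρ + ρ * (Jplus N * Jminus N))) * P) = 0 ∧
    Matrix.trace (P * (Jplus N * ρ * Jminus N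
        - (2 : ℂ)⁻¹ • (Jminus N * Jplus N * ρ + ρ * (Jminus N * Jplus N))) * P) = 0 := by
  have hJplus : Commute P (Jplus N) :=
    hP.commute commute_permMatrix_Jplus <| by
      simpa only [Jplus_conjTranspose] using commute_permMatrix_Jminus
  have hJminus : Commute P (Jminus N) := by
    simpa only [star_eq_conjTranspose, hP.2.1, Jplus_conjTranspose] using hJplus.star_star
  exact ⟨trace_mul_dissipator_mul_eq_zero hP.1 hJminus hJplus ρ,
    trace_mul_dissipator_mul_eq_zero hP.1 hJplus hJminus ρ⟩

end
end

section
/- For every integer N ≥ 1, the ergotropy of the stationary state converges in the infinite-temperature limit: lim_{α → 1⁻} [ N + α/(1−α) + (N+α)/(α^{N+1} − 1) ] = N/2 + 1/(N+1) − 1. -/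
/-!
STATEMENT 16: For every integer N ≥ 1, the ergotropy of the stationary state
converges in the infinite-temperature limit:
lim_{α → 1⁻} [ N + α/(1−α) + (N+α)/(α^{N+1} − 1) ] = N/2 + 1/(N+1) − 1.
-/

open Filter Finset

theorem nat_gauss (n : ℕ) : 2 * ∑ i ∈ Finset.range n, (i + 2) = n ^ 2 + 3 * n := by
  induction n with
  | zero => simp
  | succ k ih =>
    rw [Finset.sum_range_succ]
    have : (k+1)^2+3*(k+1) = (k^2+3*k) + (2*k+4) := by ring
    omega

theorem ergotropy_infinite_temperature_limit (N : ℕ) (hN : 1 ≤ N) :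
    Filter.Tendsto
      (fun α : ℝ => (N : ℝ) + α / (1 - α) + ((N : ℝ) + α) / (α ^ (N + 1) - 1))
      (nhdsWithin 1 (Set.Iio 1))
      (nhds ((N : ℝ) / 2 + 1 / ((N : ℝ) + 1) - 1)) := by
  set S : ℝ → ℝ := fun α => ∑ k ∈ Finset.range (N+1), α ^ k with hS
  set T : ℝ → ℝ := fun α => ∑ i ∈ Finset.range N, ∑ j ∈ Finset.range (i+2), α ^ j with hT
  have geom : ∀ α : ℝ, S α * (α - 1) = α ^ (N+1) - 1 := fun α => geom_sum_mul α (N+1)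
  have key : ∀ α : ℝ, α * S α - ((N:ℝ) + α) = (α - 1) * T α := by
    intro α
    have h1 : (α - 1) * T α = (∑ i ∈ Finset.range N, α ^ (i+2)) - N := by
      rw [hT, Finset.mul_sum]
      have : ∀ i ∈ Finset.range N, (α - 1) * ∑ j ∈ Finset.range (i+2), α ^ j
          = α ^ (i+2) - 1 := by
        intro i _
        rw [mul_comm, geom_sum_mul]
      rw [Finset.sum_congr rfl this, Finset.sum_sub_distrib, Finset.sum_const,
        Finset.card_range]
      simp
    have h2 : α * S α = (∑ i ∈ Finset.range N, α ^ (i+2)) + α := by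
      rw [hS, Finset.mul_sum]
      have : ∀ k, α * α ^ k = α ^ (k+1) := fun k => (pow_succ' α k).symm
      simp only [this]
      rw [Finset.sum_range_succ' (fun k => α ^ (k+1)) N]
      simp
    rw [h1, h2]; ring
  have S1 : S 1 = (N : ℝ) + 1 := by simp [hS]
  have T1 : 2 * T 1 = (N:ℝ)^2 + 3 * N := by
    have : T 1 = ∑ i ∈ Finset.range N, ((i:ℝ) + 2) := by
      simp [hT]
    rw [this]
    have := nat_gauss N
    have h := congrArg (Nat.cast : ℕ → ℝ) this
    push_cast at h ⊢
    linarith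
  set L : ℝ := (N : ℝ) / 2 + 1 / ((N : ℝ) + 1) - 1 with hL
  have hS1ne : S 1 ≠ 0 := by rw [S1]; positivity
  have hg : Filter.Tendsto (fun α => (N:ℝ) - T α / S α)
      (nhdsWithin 1 (Set.Iio 1)) (nhds L) := by
    have hc : ContinuousAt (fun α => (N:ℝ) - T α / S α) 1 := by
      apply ContinuousAt.sub continuousAt_const
      apply ContinuousAt.div _ _ hS1ne
      · exact Continuous.continuousAt (by unfold T; continuity)
      · exact Continuous.continuousAt (by unfold S; continuity)
    have hval : (N:ℝ) - T 1 / S 1 = L := by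
      rw [S1, hL]
      have hNe : (N:ℝ) + 1 ≠ 0 := by positivity
      field_simp
      nlinarith [T1]
    have := (hc.continuousWithinAt (s := Set.Iio 1)).tendsto
    rw [hval] at this
    exact this
  refine Filter.Tendsto.congr' ?_ hg
  have hmem : Set.Ioo (0:ℝ) 1 ∈ nhdsWithin 1 (Set.Iio 1) := by
    rw [show Set.Ioo (0:ℝ) 1 = Set.Ioi 0 ∩ Set.Iio 1 from rfl]
    exact Filter.inter_mem (mem_nhdsWithin_of_mem_nhds (Ioi_mem_nhds one_pos))
      self_mem_nhdsWithin
  filter_upwards [hmem] with α hα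
  have hα1 : α - 1 ≠ 0 := by have := hα.2; intro h; linarith [sub_eq_zero.mp h]
  have hSpos : 0 < S α := by
    rw [hS]
    exact Finset.sum_pos (fun k _ => pow_pos hα.1 k) ⟨0, Finset.mem_range.mpr (Nat.succ_pos N)⟩
  have hSne : S α ≠ 0 := ne_of_gt hSpos
  have h1α : (1:ℝ) - α ≠ 0 := by intro h; apply hα1; linarith [sub_eq_zero.mp h]
  rw [← geom α]
  have hk := key α
  field_simp
  linear_combination (1 - α) * hk
end

section
/- (Ergotropy of a decreasing Dicke-diagonal state.) Let N ≥ 2 and let p_0 ≥ p_1 ≥ … ≥ p_N ≥ 0 with Σ_{k=0}^N p_k = 1. Consider the state ρ = Σ_{k=0}^N p_k |N,k⟩⟨N,k| on (ℂ²)^{⊗N} and the Hamiltonian H_B = K (the excitation-number operator, with eigenvalue k of multiplicity binom(N,k)). Then the minimum of Tr(U ρ U† H_B) over all unitary operators U on (ℂ²)^{⊗N} equals Σ_{k=1}^N p_k, and consequently the ergotropy Tr(ρ H_B) − min_U Tr(U ρ U† H_B) equals Σ_{k=2}^N (k−1) p_k. -/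
/-! STATEMENT 19 (Ergotropy of a decreasing Dicke-diagonal state):
Let N ≥ 2 and p_0 ≥ p_1 ≥ … ≥ p_N ≥ 0 with Σ_{k=0}^N p_k = 1.  For the state
ρ = Σ_{k=0}^N p_k |N,k⟩⟨N,k| and the Hamiltonian H_B = K (the excitation-number
operator), the minimum of Tr(U ρ U† H_B) over all unitaries U on (ℂ²)^{⊗N}
equals Σ_{k=1}^N p_k, and consequently the ergotropy
Tr(ρ H_B) − min_U Tr(U ρ U† H_B) equals Σ_{k=2}^N (k−1) p_k. -/

open Matrix BigOperators

noncomputable section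

/-- The Dicke state |N,k⟩ = binom(N,k)^{−1/2} Σ_{x : |x| = k} |x⟩, the
normalized uniform superposition of computational basis states with exactly
`k` ones (the zero vector when `k > N`). -/
def dicke (N k : ℕ) : QVec N :=
  fun x => if (∑ i, (x i : ℕ)) = k then ((Real.sqrt (N.choose k) : ℂ))⁻¹ else 0

/-- The excitation-number operator K = Σᵢ σ₊^(i) σ₋^(i). -/
def Kop (N : ℕ) : QOp N := ∑ i, sigmaPlus N i * sigmaMinus N i

/-- The Dicke projector |N,k⟩⟨N,k|. -/
def dickeProj (N k : ℕ) : QOp N :=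
  Matrix.vecMulVec (dicke N k) (star (dicke N k))

/-! ### Auxiliary lemmas -/

/-- weight of a bit string -/
def wt {N : ℕ} (x : Fin N → Fin 2) : ℕ := ∑ i, (x i : ℕ)

lemma fin2_coe (a : Fin 2) : (a : ℕ) = if a = 1 then 1 else 0 := by
  fin_cases a <;> simp

lemma sigma_pm_apply (N : ℕ) (i : Fin N) (x y : Fin N → Fin 2) :
    (sigmaPlus N i * sigmaMinus N i) x y = if x = y ∧ x i = 1 then 1 else 0 := by
  classical
  rw [Matrix.mul_apply]
  by_cases h : x = y ∧ x i = 1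
  · obtain ⟨rfl, h1⟩ := h
    rw [if_pos ⟨rfl, h1⟩]
    rw [Finset.sum_eq_single (Function.update x i 0)]
    · simp only [sigmaPlus, sigmaMinus, Matrix.of_apply]
      rw [if_pos, if_pos, one_mul]
      · exact ⟨Function.update_self i 0 x, h1,
          fun j hj => Function.update_of_ne hj 0 x⟩
      · exact ⟨h1, Function.update_self i 0 x,
          fun j hj => (Function.update_of_ne hj 0 x).symm⟩
    · intro z _ hz
      simp only [sigmaPlus, sigmaMinus, Matrix.of_apply]
      rw [if_neg, zero_mul]
      rintro ⟨-, hz0, hzag⟩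
      apply hz
      funext j
      by_cases hj : j = i
      · subst hj; simp [hz0, Function.update_apply]
      · simp [Function.update_apply, hj, (hzag j hj).symm]
    · simp
  · rw [if_neg h]
    apply Finset.sum_eq_zero
    intro z _
    simp only [sigmaPlus, sigmaMinus, Matrix.of_apply]
    rcases Classical.em (x i = 1 ∧ z i = 0 ∧ ∀ j, j ≠ i → x j = z j) with ⟨h1, h0, hag⟩ | hc
    · rw [if_pos ⟨h1, h0, hag⟩, one_mul, ite_eq_right_iff]
      rintro ⟨-, hy1, hag'⟩
      refine absurd ⟨funext fun j => ?_, h1⟩ h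
      by_cases hj : j = i
      · subst hj; rw [h1, hy1]
      · rw [hag j hj, hag' j hj]
    · rw [if_neg hc, zero_mul]

lemma Kop_apply (N : ℕ) (x y : Fin N → Fin 2) :
    Kop N x y = if x = y then (wt x : ℂ) else 0 := by
  classical
  have : Kop N x y = ∑ i, (sigmaPlus N i * sigmaMinus N i) x y := by
    simp [Kop, Matrix.sum_apply]
  rw [this]
  simp only [sigma_pm_apply]
  by_cases hxy : x = y
  · subst hxy
    simp only [true_and, if_pos rfl, wt]
    push_cast
    rw [Finset.sum_congr rfl]
    intro i _
    rw [fin2_coe]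
    push_cast
    rfl
  · simp [hxy]

lemma wt_eq_card {N : ℕ} (x : Fin N → Fin 2) :
    wt x = (Finset.univ.filter fun i => x i = 1).card := by
  rw [wt, Finset.card_filter]
  exact Finset.sum_congr rfl fun i _ => fin2_coe (x i)

lemma card_wt (N k : ℕ) :
    ((Finset.univ : Finset (Fin N → Fin 2)).filter fun x => wt x = k).card
      = N.choose k := by
  classical
  rw [show N.choose k = ((Finset.univ : Finset (Fin N)).powersetCard k).card by
    simp [Finset.card_powersetCard]]
  apply Finset.card_bij (fun x _ => Finset.univ.filter fun i => x i = 1)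
  · intro x hx
    simp only [Finset.mem_filter, Finset.mem_univ, true_and] at hx
    simp only [Finset.mem_powersetCard]
    exact ⟨Finset.filter_subset _ _, by rw [← wt_eq_card, hx]⟩
  · intro x hx y hy hxy
    funext i
    have := Finset.ext_iff.1 hxy i
    simp only [Finset.mem_filter, Finset.mem_univ, true_and] at this
    have h2 : ∀ a : Fin 2, a = 0 ∨ a = 1 := by decide
    rcases h2 (x i) with hi | hi <;> rcases h2 (y i) with hj | hj <;> simp_all
  · intro S hS
    refine ⟨fun i => if i ∈ S then 1 else 0, ?_, ?_⟩
    · simp only [Finset.mem_filter, Finset.mem_univ, true_and, wt_eq_card]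
      simp only [Finset.mem_powersetCard] at hS
      rw [← hS.2]
      congr 1
      ext i
      simp
    · ext i
      simp

lemma dicke_inner (N : ℕ) {j k : ℕ} (hj : j ≤ N) (hk : k ≤ N) :
    ∑ x : Fin N → Fin 2, (starRingEnd ℂ) (dicke N j x) * dicke N k x
      = if j = k then 1 else 0 := by
  classical
  by_cases hjk : j = k
  · subst hjk
    rw [if_pos rfl]
    have hc : (0:ℝ) < (N.choose j : ℝ) := by
      exact_mod_cast Nat.choose_pos hj
    have hterm : ∀ x : Fin N → Fin 2,
        (starRingEnd ℂ) (dicke N j x) * dicke N j x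
          = if wt x = j then ((N.choose j : ℂ))⁻¹ else 0 := by
      intro x
      simp only [dicke]
      by_cases hx : (∑ i, (x i : ℕ)) = j
      · rw [if_pos hx, if_pos (show wt x = j from hx), ← Complex.ofReal_inv, Complex.conj_ofReal,
          ← Complex.ofReal_mul, ← mul_inv, Real.mul_self_sqrt hc.le]
        norm_num
      · simp [hx, wt]
    rw [Finset.sum_congr rfl fun x _ => hterm x, Finset.sum_ite, Finset.sum_const,
      Finset.sum_const_zero, add_zero, card_wt, nsmul_eq_mul]
    rw [mul_inv_cancel₀]
    exact_mod_cast hc.ne'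
  · rw [if_neg hjk]
    apply Finset.sum_eq_zero
    intro x _
    simp only [dicke]
    by_cases hx : (∑ i, (x i : ℕ)) = j
    · have hxk : ¬ (∑ i, (x i : ℕ)) = k := by rw [hx]; exact hjk
      rw [if_pos hx, if_neg hxk, mul_zero]
    · rw [if_neg hx, map_zero, zero_mul]

lemma sandwich (N : ℕ) (U : QOp N) (v : QVec N) :
    U * Matrix.vecMulVec v (star v) * Uᴴ
      = Matrix.vecMulVec (U.mulVec v) (star (U.mulVec v)) := by
  ext x y
  simp only [Matrix.mul_apply, Matrix.vecMulVec_apply, Matrix.conjTranspose_apply,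
    Pi.star_apply, Matrix.mulVec, dotProduct, RCLike.star_def, map_sum, _root_.map_mul,
    Finset.sum_mul, Finset.mul_sum]
  refine Finset.sum_congr rfl fun b _ => Finset.sum_congr rfl fun a _ => by ring

lemma trace_vmv_K (N : ℕ) (w : QVec N) :
    Matrix.trace (Matrix.vecMulVec w (star w) * Kop N)
      = ∑ x, (wt x : ℂ) * (w x * (starRingEnd ℂ) (w x)) := by
  rw [Matrix.trace]
  simp only [Matrix.diag_apply, Matrix.mul_apply, Matrix.vecMulVec_apply, Kop_apply,
    Pi.star_apply, RCLike.star_def, mul_ite, mul_zero]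
  refine Finset.sum_congr rfl fun x _ => ?_
  rw [Finset.sum_ite_eq' Finset.univ x fun y => w x * (starRingEnd ℂ) (w y) * (wt y : ℂ)]
  simp only [Finset.mem_univ, if_true]
  ring

lemma trace_sandwich (N : ℕ) (U : QOp N) (v : QVec N) :
    Matrix.trace (U * Matrix.vecMulVec v (star v) * Uᴴ * Kop N)
      = ∑ x, (wt x : ℂ) * (U.mulVec v x * (starRingEnd ℂ) (U.mulVec v x)) := by
  rw [sandwich, trace_vmv_K]

lemma inner_mulVec (N : ℕ) (U : QOp N) (hU : Uᴴ * U = 1) (v v' : QVec N) :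
    ∑ x, (starRingEnd ℂ) (U.mulVec v x) * U.mulVec v' x
      = ∑ x, (starRingEnd ℂ) (v x) * v' x := by
  have key : ∀ a b, (∑ x, (starRingEnd ℂ) (U x a) * U x b) = if a = b then 1 else 0 := by
    intro a b
    have h := congrArg (fun M : QOp N => M a b) hU
    simpa [Matrix.mul_apply, Matrix.conjTranspose_apply, Matrix.one_apply,
      RCLike.star_def] using h
  calc ∑ x, (starRingEnd ℂ) (U.mulVec v x) * U.mulVec v' x
      = ∑ b, ∑ a, ((starRingEnd ℂ) (v a) * v' b)
          * ∑ x, (starRingEnd ℂ) (U x a) * U x b := by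
        simp only [Matrix.mulVec, dotProduct, map_sum, _root_.map_mul,
          Finset.sum_mul, Finset.mul_sum]
        rw [Finset.sum_comm]
        refine Finset.sum_congr rfl fun b _ => ?_
        rw [Finset.sum_comm]
        refine Finset.sum_congr rfl fun a _ => Finset.sum_congr rfl fun x _ => by ring
    _ = ∑ b, ∑ a, ((starRingEnd ℂ) (v a) * v' b) * if a = b then 1 else 0 := by
        simp only [key]
    _ = ∑ x, (starRingEnd ℂ) (v x) * v' x := by
        simp [Finset.sum_ite_eq', mul_ite]

def toE {N : ℕ} (v : QVec N) : EuclideanSpace ℂ (Fin N → Fin 2) :=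
  (WithLp.equiv 2 ((Fin N → Fin 2) → ℂ)).symm v

lemma inner_toE {N : ℕ} (v w : QVec N) :
    (inner ℂ (toE v) (toE w) : ℂ) = ∑ x, (starRingEnd ℂ) (v x) * w x := by
  simp [toE, PiLp.inner_apply, RCLike.inner_apply, mul_comm]

lemma toE_coe {N : ℕ} (f : EuclideanSpace ℂ (Fin N → Fin 2)) : toE (fun y => f y) = f := rfl

def sig (N k : ℕ) : Fin N → Fin 2 := fun i => if (i : ℕ) + 1 = k then 1 else 0

def kap {N : ℕ} (x : Fin N → Fin 2) : ℕ := ∑ i, if x i = 1 then (i : ℕ) + 1 else 0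

lemma kap_sig (N k : ℕ) (hk : k ≤ N) : kap (sig N k) = k := by
  rcases Nat.eq_zero_or_pos k with rfl | hpos
  · simp [kap, sig]
  · have hi0 : k - 1 < N := by omega
    rw [kap, Finset.sum_eq_single (⟨k - 1, hi0⟩ : Fin N)]
    · have h1 : k - 1 + 1 = k := by omega
      simp [sig, h1]
    · intro i _ hi
      rw [if_neg]
      simp only [sig]
      rw [if_neg]
      · simp
      · intro h
        apply hi
        apply Fin.ext
        simp
        omega
    · simp

lemma wt_sig (N k : ℕ) (hk : k ≤ N) : wt (sig N k) = if k = 0 then 0 else 1 := by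
  rcases Nat.eq_zero_or_pos k with rfl | hpos
  · simp [wt, sig]
  · rw [if_neg (by omega)]
    have hi0 : k - 1 < N := by omega
    rw [wt, Finset.sum_eq_single (⟨k - 1, hi0⟩ : Fin N)]
    · have h1 : k - 1 + 1 = k := by omega
      simp [sig, h1]
    · intro i _ hi
      simp only [sig]
      rw [if_neg]
      · simp
      · intro h
        apply hi
        apply Fin.ext
        simp
        omega
    · simp

lemma exists_good_b (N : ℕ) :
    ∃ b : OrthonormalBasis (Fin N → Fin 2) ℂ (EuclideanSpace ℂ (Fin N → Fin 2)),
      ∀ k ≤ N, b (sig N k) = toE (dicke N k) := by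
  classical
  set s : Set (Fin N → Fin 2) := sig N '' Set.Iic N with hs
  set v : (Fin N → Fin 2) → EuclideanSpace ℂ (Fin N → Fin 2) :=
    fun x => toE (dicke N (kap x)) with hv
  have hkap : ∀ x ∈ s, kap x ≤ N ∧ sig N (kap x) = x := by
    rintro x ⟨k, hk, rfl⟩
    rw [kap_sig N k hk]
    exact ⟨hk, rfl⟩
  have horth : Orthonormal ℂ (s.restrict v) := by
    rw [orthonormal_iff_ite]
    rintro ⟨x, hx⟩ ⟨y, hy⟩
    show inner ℂ (v x) (v y) = _
    rw [hv]
    simp only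
    rw [inner_toE, dicke_inner N (hkap x hx).1 (hkap y hy).1]
    congr 1
    simp only [Subtype.mk.injEq, eq_iff_iff]
    constructor
    · intro h
      rw [← (hkap x hx).2, ← (hkap y hy).2, h]
    · intro h; rw [h]
  obtain ⟨b, hb⟩ := horth.exists_orthonormalBasis_extension_of_card_eq
    (by simp [finrank_euclideanSpace])
  refine ⟨b, fun k hk => ?_⟩
  rw [hb (sig N k) ⟨k, hk, rfl⟩, hv]
  simp only
  rw [kap_sig N k hk]

lemma good_U (N : ℕ) :
    ∃ U : Matrix.unitaryGroup (Fin N → Fin 2) ℂ, ∀ k ≤ N,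
      (U : QOp N).mulVec (dicke N k) = fun x => if x = sig N k then 1 else 0 := by
  classical
  obtain ⟨b, hb⟩ := exists_good_b N
  have hinner : ∀ x y, (inner ℂ (b x) (b y) : ℂ) = if x = y then 1 else 0 :=
    orthonormal_iff_ite.1 b.orthonormal
  set U : QOp N := Matrix.of fun x y => (starRingEnd ℂ) (b x y) with hUdef
  have hUinner : ∀ x (v : QVec N), U.mulVec v x = (inner ℂ (b x) (toE v) : ℂ) := by
    intro x v
    have h2 := inner_toE (N := N) (fun y => b x y) v
    rw [toE_coe] at h2
    rw [Matrix.mulVec, dotProduct, h2]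
    exact Finset.sum_congr rfl fun i _ => rfl
  have hUmem : U ∈ Matrix.unitaryGroup (Fin N → Fin 2) ℂ := by
    rw [Matrix.mem_unitaryGroup_iff]
    ext x y
    have h2 := inner_toE (N := N) (fun z => b x z) (fun z => b y z)
    rw [toE_coe, toE_coe] at h2
    rw [Matrix.mul_apply, Matrix.one_apply, ← hinner x y, h2]
    refine Finset.sum_congr rfl fun z _ => ?_
    simp [hUdef, Matrix.conjTranspose_apply]
  refine ⟨⟨U, hUmem⟩, fun k hk => ?_⟩
  funext x
  rw [hUinner x (dicke N k), ← hb k hk, hinner x (sig N k)]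

lemma bessel (N : ℕ) (w : Fin (N+1) → QVec N)
    (h : ∀ j k, ∑ x, (starRingEnd ℂ) (w j x) * w k x = if j = k then 1 else 0) :
    ∑ k, Complex.normSq (w k (fun _ => 0)) ≤ 1 := by
  classical
  have horth : Orthonormal ℂ (fun k => toE (w k)) := by
    rw [orthonormal_iff_ite]
    intro j k
    rw [inner_toE, h j k]
  set e0 : QVec N := fun x => if x = (fun _ => 0) then 1 else 0 with he0
  have hnorm : ‖toE e0‖ = 1 := by
    rw [EuclideanSpace.norm_eq]
    have : ∀ x, ‖toE e0 x‖ ^ 2 = if x = (fun _ => 0) then 1 else 0 := by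
      intro x
      by_cases hx : x = (fun _ => 0) <;> simp [toE, e0, hx]
    rw [Finset.sum_congr rfl fun x _ => this x]
    simp
  have hin : ∀ k, (inner ℂ (toE (w k)) (toE e0) : ℂ) = (starRingEnd ℂ) (w k (fun _ => 0)) := by
    intro k
    rw [inner_toE]
    rw [Finset.sum_eq_single (fun _ => 0 : Fin N → Fin 2)]
    · simp [e0]
    · intro x _ hx
      simp [e0, hx]
    · simp
  have hB := horth.sum_inner_products_le (s := Finset.univ) (toE e0)
  rw [hnorm] at hB
  simp only [hin, one_pow] at hB
  calc ∑ k, Complex.normSq (w k (fun _ => 0))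
      = ∑ k, ‖(starRingEnd ℂ) (w k (fun _ => 0))‖ ^ 2 := by
        refine Finset.sum_congr rfl fun k _ => ?_
        rw [RCLike.norm_conj, Complex.sq_norm]
    _ ≤ 1 := hB
lemma dicke_apply {N k : ℕ} (x : Fin N → Fin 2) :
    dicke N k x = if wt x = k then ((Real.sqrt (N.choose k) : ℂ))⁻¹ else 0 := rfl

lemma trace_formula (N : ℕ) (p : ℕ → ℝ) (U : QOp N) :
    Matrix.trace (U * (∑ k ∈ Finset.range (N + 1), (p k : ℂ) • dickeProj N k) * Uᴴ * Kop N)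
      = ((∑ k ∈ Finset.range (N + 1),
          p k * ∑ x, (wt x : ℝ) * Complex.normSq (U.mulVec (dicke N k) x) : ℝ) : ℂ) := by
  have lhs : Matrix.trace (U * (∑ k ∈ Finset.range (N + 1), (p k : ℂ) • dickeProj N k)
        * Uᴴ * Kop N)
      = ∑ k ∈ Finset.range (N + 1), (p k : ℂ)
          * ∑ x, (wt x : ℂ) * (U.mulVec (dicke N k) x
              * (starRingEnd ℂ) (U.mulVec (dicke N k) x)) := by
    rw [Finset.mul_sum, Finset.sum_mul, Finset.sum_mul, Matrix.trace_sum]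
    refine Finset.sum_congr rfl fun k _ => ?_
    rw [Matrix.mul_smul, Matrix.smul_mul, Matrix.smul_mul, Matrix.trace_smul, smul_eq_mul]
    congr 1
    rw [dickeProj]
    exact trace_sandwich N U (dicke N k)
  rw [lhs]
  push_cast
  refine Finset.sum_congr rfl fun k _ => ?_
  congr 1
  refine Finset.sum_congr rfl fun x _ => ?_
  rw [Complex.mul_conj]

lemma dicke_energy (N k : ℕ) (hk : k ≤ N) :
    ∑ x, (wt x : ℝ) * Complex.normSq (dicke N k x) = k := by
  classical
  have hc : (0:ℝ) < (N.choose k : ℝ) := by exact_mod_cast Nat.choose_pos hk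
  have hterm : ∀ x : Fin N → Fin 2, (wt x : ℝ) * Complex.normSq (dicke N k x)
      = if wt x = k then (k : ℝ) * ((N.choose k : ℝ))⁻¹ else 0 := by
    intro x
    rw [dicke_apply]
    by_cases hx : wt x = k
    · rw [if_pos hx, if_pos hx, ← Complex.ofReal_inv, Complex.normSq_ofReal, hx,
        ← mul_inv, Real.mul_self_sqrt hc.le]
    · simp [hx]
  rw [Finset.sum_congr rfl fun x _ => hterm x, Finset.sum_ite, Finset.sum_const,
    Finset.sum_const_zero, add_zero, card_wt, nsmul_eq_mul]
  field_simp

lemma mulVec_normSq_one (N : ℕ) (U : QOp N) (hU : Uᴴ * U = 1) {k : ℕ} (hk : k ≤ N) :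
    ∑ x, Complex.normSq (U.mulVec (dicke N k) x) = 1 := by
  have h2 : ∑ x, (starRingEnd ℂ) (U.mulVec (dicke N k) x) * U.mulVec (dicke N k) x = 1 := by
    rw [inner_mulVec N U hU, dicke_inner N hk hk, if_pos rfl]
  have h3 : ((∑ x, Complex.normSq (U.mulVec (dicke N k) x) : ℝ) : ℂ) = 1 := by
    push_cast
    rw [← h2]
    refine Finset.sum_congr rfl fun x _ => ?_
    rw [mul_comm, Complex.mul_conj]
  exact_mod_cast h3

lemma Ereal_ge (N : ℕ) (w : QVec N) (hnorm : ∑ x, Complex.normSq (w x) = 1) :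
    1 - Complex.normSq (w (fun _ => 0)) ≤ ∑ x, (wt x : ℝ) * Complex.normSq (w x) := by
  classical
  have step : ∑ x, (Complex.normSq (w x)
        - (if x = (fun _ => 0) then Complex.normSq (w x) else 0))
      ≤ ∑ x, (wt x : ℝ) * Complex.normSq (w x) := by
    apply Finset.sum_le_sum
    intro x _
    by_cases hx : x = (fun _ => 0)
    · rw [if_pos hx, sub_self]
      exact mul_nonneg (by positivity) (Complex.normSq_nonneg _)
    · rw [if_neg hx, sub_zero]
      have hwt : 1 ≤ wt x := by
        rcases Nat.eq_zero_or_pos (wt x) with h0 | h1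
        · exfalso
          apply hx
          funext i
          have := (Finset.sum_eq_zero_iff.1 h0) i (Finset.mem_univ i)
          exact Fin.ext this
        · exact h1
      calc Complex.normSq (w x) = 1 * Complex.normSq (w x) := (one_mul _).symm
        _ ≤ (wt x : ℝ) * Complex.normSq (w x) :=
            mul_le_mul_of_nonneg_right (by exact_mod_cast hwt) (Complex.normSq_nonneg _)
  calc 1 - Complex.normSq (w (fun _ => 0))
      = ∑ x, (Complex.normSq (w x)
          - (if x = (fun _ => 0) then Complex.normSq (w x) else 0)) := by
        rw [Finset.sum_sub_distrib, hnorm]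
        congr 1
        rw [Finset.sum_ite_eq' Finset.univ (fun _ => 0 : Fin N → Fin 2)
          (fun x => Complex.normSq (w x))]
        simp
    _ ≤ _ := step

lemma split0 (f : ℕ → ℝ) (N : ℕ) :
    ∑ k ∈ Finset.range (N + 1), f k = f 0 + ∑ k ∈ Finset.Icc 1 N, f k := by
  have h : Finset.range (N + 1) = insert 0 (Finset.Icc 1 N) := by
    ext m
    simp only [Finset.mem_range, Finset.mem_insert, Finset.mem_Icc]
    omega
  rw [h, Finset.sum_insert (by simp)]

lemma split1 (f : ℕ → ℝ) (N : ℕ) (hN : 1 ≤ N) :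
    ∑ k ∈ Finset.Icc 1 N, f k = f 1 + ∑ k ∈ Finset.Icc 2 N, f k := by
  have h : Finset.Icc 1 N = insert 1 (Finset.Icc 2 N) := by
    ext m
    simp only [Finset.mem_insert, Finset.mem_Icc]
    omega
  rw [h, Finset.sum_insert (by simp)]

/-- Ergotropy of a decreasing Dicke-diagonal state: the minimal energy over
all unitary reshufflings is Σ_{k=1}^N p_k, so the ergotropy is
Σ_{k=2}^N (k−1) p_k. -/
theorem ergotropy_of_decreasing_dicke_diagonal (N : ℕ) (hN : 2 ≤ N)
    (p : ℕ → ℝ) (hdec : ∀ k, k < N → p (k + 1) ≤ p k) (hlast : 0 ≤ p N)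
    (hsum : ∑ k ∈ Finset.range (N + 1), p k = 1) :
    IsLeast {x : ℝ | ∃ U : Matrix.unitaryGroup (Fin N → Fin 2) ℂ,
        Matrix.trace ((U : QOp N)
          * (∑ k ∈ Finset.range (N + 1), (p k : ℂ) • dickeProj N k)
          * (U : QOp N)ᴴ * Kop N) = (x : ℂ)}
      (∑ k ∈ Finset.Icc 1 N, p k) ∧
    Matrix.trace ((∑ k ∈ Finset.range (N + 1), (p k : ℂ) • dickeProj N k) * Kop N)
      - ((∑ k ∈ Finset.Icc 1 N, p k : ℝ) : ℂ)
      = ((∑ k ∈ Finset.Icc 2 N, ((k : ℝ) - 1) * p k : ℝ) : ℂ) := by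
  classical
  have hmono : ∀ {j k : ℕ}, j ≤ k → k ≤ N → p k ≤ p j := by
    intro j k hjk hkN
    induction k with
    | zero =>
      have hj : j = 0 := by omega
      subst hj; exact le_rfl
    | succ n ih =>
      rcases Nat.eq_or_lt_of_le hjk with h | h
      · subst h; exact le_rfl
      · exact (hdec n (by omega)).trans (ih (by omega) (by omega))
  have hnn : ∀ k, k ≤ N → 0 ≤ p k := fun k hk => le_trans hlast (hmono hk le_rfl)
  have hp0 : ∀ k, k ≤ N → p k ≤ p 0 := fun k hk => hmono (Nat.zero_le k) hk
  have hsplit : ∑ k ∈ Finset.range (N + 1), p k = p 0 + ∑ k ∈ Finset.Icc 1 N, p k :=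
    split0 p N
  refine ⟨⟨?_, ?_⟩, ?_⟩
  · -- membership
    obtain ⟨U, hU⟩ := good_U N
    refine ⟨U, ?_⟩
    rw [trace_formula N p (U : QOp N)]
    norm_cast
    have hval : ∀ k, k ≤ N →
        (∑ x, (wt x : ℝ) * Complex.normSq ((U : QOp N).mulVec (dicke N k) x))
          = if k = 0 then 0 else 1 := by
      intro k hk
      rw [hU k hk]
      rw [Finset.sum_eq_single (sig N k)]
      · rw [wt_sig N k hk]
        by_cases hk0 : k = 0 <;> simp [hk0]
      · intro x _ hx
        simp [hx]
      · simp
    calc ∑ k ∈ Finset.range (N + 1),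
          p k * ∑ x, (wt x : ℝ) * Complex.normSq ((U : QOp N).mulVec (dicke N k) x)
        = ∑ k ∈ Finset.range (N + 1), (if k = 0 then 0 else p k) := by
          refine Finset.sum_congr rfl fun k hk => ?_
          rw [hval k (by simp only [Finset.mem_range] at hk; omega)]
          by_cases hk0 : k = 0 <;> simp [hk0]
      _ = ∑ k ∈ Finset.Icc 1 N, p k := by
          rw [split0 (fun k => if k = 0 then 0 else p k) N]
          have h0 : (if (0:ℕ) = 0 then (0:ℝ) else p 0) = 0 := by simp
          rw [h0, zero_add]
          refine Finset.sum_congr rfl fun k hk => ?_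
          have : k ≠ 0 := by simp only [Finset.mem_Icc] at hk; omega
          rw [if_neg this]
  · -- lower bound
    rintro x ⟨U, hUx⟩
    have hU1 : (U : QOp N)ᴴ * (U : QOp N) = 1 := by
      have h := Matrix.mem_unitaryGroup_iff'.1 U.prop
      rwa [Matrix.star_eq_conjTranspose] at h
    rw [trace_formula N p (U : QOp N)] at hUx
    have hx' : (∑ k ∈ Finset.range (N + 1),
        p k * ∑ y, (wt y : ℝ) * Complex.normSq ((U : QOp N).mulVec (dicke N k) y)) = x :=
      Complex.ofReal_inj.1 hUx
    set w : ℕ → QVec N := fun k => (U : QOp N).mulVec (dicke N k) with hw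
    set q : ℕ → ℝ := fun k => Complex.normSq (w k (fun _ => 0)) with hqdef
    set E : ℕ → ℝ := fun k => ∑ y, (wt y : ℝ) * Complex.normSq (w k y) with hE
    have hnormk : ∀ k, k ≤ N → ∑ y, Complex.normSq (w k y) = 1 :=
      fun k hk => mulVec_normSq_one N (U : QOp N) hU1 hk
    have hEk : ∀ k, k ≤ N → 1 - q k ≤ E k :=
      fun k hk => Ereal_ge N (w k) (hnormk k hk)
    have hqnn : ∀ k, 0 ≤ q k := fun k => Complex.normSq_nonneg _
    have hbessel : ∑ k ∈ Finset.range (N + 1), q k ≤ 1 := by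
      have horth : ∀ j k : Fin (N + 1),
          ∑ y, (starRingEnd ℂ) (w (j : ℕ) y) * w (k : ℕ) y
            = if j = k then 1 else 0 := by
        intro j k
        rw [hw]
        simp only
        rw [inner_mulVec N (U : QOp N) hU1,
          dicke_inner N (Nat.lt_succ_iff.1 j.isLt) (Nat.lt_succ_iff.1 k.isLt)]
        congr 1
        simp [Fin.ext_iff]
      have hb := bessel N (fun k => w (k : ℕ)) horth
      rwa [Fin.sum_univ_eq_sum_range (fun k => Complex.normSq (w k (fun _ => 0))) (N + 1)] at hb
    have h1 : ∑ k ∈ Finset.range (N + 1), p k * (1 - q k)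
        ≤ ∑ k ∈ Finset.range (N + 1), p k * E k := by
      refine Finset.sum_le_sum fun k hk => ?_
      have hkN : k ≤ N := by simp only [Finset.mem_range] at hk; omega
      exact mul_le_mul_of_nonneg_left (hEk k hkN) (hnn k hkN)
    have h2 : ∑ k ∈ Finset.range (N + 1), p k * (1 - q k)
        = ∑ k ∈ Finset.range (N + 1), p k - ∑ k ∈ Finset.range (N + 1), p k * q k := by
      rw [← Finset.sum_sub_distrib]
      refine Finset.sum_congr rfl fun k _ => by ring
    have h3 : ∑ k ∈ Finset.range (N + 1), p k * q k
        ≤ p 0 * ∑ k ∈ Finset.range (N + 1), q k := by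
      rw [Finset.mul_sum]
      refine Finset.sum_le_sum fun k hk => ?_
      have hkN : k ≤ N := by simp only [Finset.mem_range] at hk; omega
      exact mul_le_mul_of_nonneg_right (hp0 k hkN) (hqnn k)
    have h4 : p 0 * ∑ k ∈ Finset.range (N + 1), q k ≤ p 0 * 1 :=
      mul_le_mul_of_nonneg_left hbessel (hnn 0 (by omega))
    have key : ∑ k ∈ Finset.Icc 1 N, p k
        ≤ ∑ k ∈ Finset.range (N + 1), p k * E k := by
      have h5 : ∑ k ∈ Finset.Icc 1 N, p k = 1 - p 0 := by
        rw [← hsum, hsplit]; ring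
      linarith
    rw [← hx']
    exact key
  · -- ergotropy value
    have h1 : Matrix.trace ((∑ k ∈ Finset.range (N + 1), (p k : ℂ) • dickeProj N k) * Kop N)
        = Matrix.trace ((1 : QOp N)
            * (∑ k ∈ Finset.range (N + 1), (p k : ℂ) • dickeProj N k)
            * (1 : QOp N)ᴴ * Kop N) := by
      rw [Matrix.conjTranspose_one, one_mul, mul_one]
    rw [h1, trace_formula N p (1 : QOp N)]
    have h2 : (∑ k ∈ Finset.range (N + 1),
        p k * ∑ x, (wt x : ℝ) * Complex.normSq ((1 : QOp N).mulVec (dicke N k) x))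
        = ∑ k ∈ Finset.range (N + 1), p k * k := by
      refine Finset.sum_congr rfl fun k hk => ?_
      have hkN : k ≤ N := by simp only [Finset.mem_range] at hk; omega
      rw [Matrix.one_mulVec, dicke_energy N k hkN]
    rw [h2, ← Complex.ofReal_sub]
    congr 1
    rw [split0 (fun k => p k * k) N]
    simp only [Nat.cast_zero, mul_zero, zero_add]
    rw [← Finset.sum_sub_distrib]
    rw [split1 (fun k => p k * (k : ℝ) - p k) N (by omega)]
    simp only [Nat.cast_one, mul_one, sub_self, zero_add]
    refine Finset.sum_congr rfl fun k _ => by ring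

end
end
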